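/- arXiv:0804.4084 — 2 statements merged into one kernel-verified Lean document; each statement's English description precedes it below -/
import Mathlib

section
/- In the Riemannian Lie algebra family, the components F_ijk = F(X_i,X_j,X_k) satisfy: F₂₁₁ = −F₂₃₃ = 2F₁₃₄ = 2F₃₂₃ = −2F₁₁₂ = −2F₃₁₄ = λ₁; F₁₄₄ = −F₁₂₂ = 2F₂₁₂ = 2F₄₂₃ = −2F₂₃₄ = −2F₄₁₄ = λ₂; F₃₂₂ = −F₃₄₄ = 2F₂₁₄ = 2F₄₃₄ = −2F₂₂₃ = −2F₄₁₂ = λ₃; F₄₃₃ = −F₄₁₁ = 2F₁₄₁ = 2F₃₂₁ = −2F₁₃₂ = −2F₃₃₄ = λ₄. -/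
noncomputable section

/-- The inner product for which the basis `b` is orthonormal. -/
def gR {L : Type*} [AddCommGroup L] [Module ℝ L] (b : Module.Basis (Fin 4) ℝ L) (x y : L) : ℝ :=
  ∑ i, b.repr x i * b.repr y i

/-- The almost product structure `P` with `PX₁ = X₃`, `PX₂ = X₄`, `PX₃ = X₁`, `PX₄ = X₂`. -/
def PR {L : Type*} [AddCommGroup L] [Module ℝ L] (b : Module.Basis (Fin 4) ℝ L) : L →ₗ[ℝ] L :=
  b.constr ℝ ![b 2, b 3, b 0, b 1]

/-- `(∇ₓP)y = (1/2)([x,Py] − P[x,y])`. -/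
def nablaP {L : Type*} [LieRing L] [LieAlgebra ℝ L] (b : Module.Basis (Fin 4) ℝ L) (x y : L) : L :=
  (2⁻¹ : ℝ) • (⁅x, PR b y⁆ - PR b ⁅x, y⁆)

/-- `F(x,y,z) = g((∇ₓP)y, z)`. -/
def FR {L : Type*} [LieRing L] [LieAlgebra ℝ L] (b : Module.Basis (Fin 4) ℝ L) (x y z : L) : ℝ :=
  gR b (nablaP b x y) z

/-- The curvature tensor `R(x,y,z,w) = −(1/4)g([x,y],[z,w])`. -/
def RT {L : Type*} [LieRing L] [LieAlgebra ℝ L] (b : Module.Basis (Fin 4) ℝ L) (x y z w : L) : ℝ :=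
  -(4⁻¹ : ℝ) * gR b ⁅x, y⁆ ⁅z, w⁆

/-- The Ricci tensor `ρ(y,z) = Σᵢ R(Xᵢ,y,z,Xᵢ)`. -/
def ricR {L : Type*} [LieRing L] [LieAlgebra ℝ L] (b : Module.Basis (Fin 4) ℝ L) (y z : L) : ℝ :=
  ∑ i, RT b (b i) y z (b i)

/-- The scalar curvature `τ = Σᵢ ρ(Xᵢ,Xᵢ)`. -/
def tauR {L : Type*} [LieRing L] [LieAlgebra ℝ L] (b : Module.Basis (Fin 4) ℝ L) : ℝ :=
  ∑ i, ricR b (b i) (b i)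

/-- The Nijenhuis tensor `N(x,y) = [x,y] + P[Px,y] + P[x,Py] − [Px,Py]`. -/
def NijR {L : Type*} [LieRing L] [LieAlgebra ℝ L] (b : Module.Basis (Fin 4) ℝ L) (x y : L) : L :=
  ⁅x, y⁆ + PR b ⁅PR b x, y⁆ + PR b ⁅x, PR b y⁆ - ⁅PR b x, PR b y⁆

/-- Sectional curvature of the 2-plane spanned by `Xᵢ` and `Xⱼ`. -/
def sectR {L : Type*} [LieRing L] [LieAlgebra ℝ L] (b : Module.Basis (Fin 4) ℝ L) (i j : Fin 4) : ℝ :=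
  RT b (b i) (b j) (b j) (b i) /
    (gR b (b i) (b i) * gR b (b j) (b j) - (gR b (b i) (b j)) ^ 2)

/- Since `P` permutes the orthonormal basis by the involution `σ = swapPairs`, each component is
`F_ijk = ½ (c^k_{i σ(j)} - c^{σ(k)}_{ij})` in the structure constants `c`, read off the brackets. -/

def swapPairs : Fin 4 → Fin 4 := ![2, 3, 0, 1]

section Basis

variable {L : Type*} [AddCommGroup L] [Module ℝ L] (b : Module.Basis (Fin 4) ℝ L)

theorem gR_basis_right (x : L) (k : Fin 4) : gR b x (b k) = b.repr x k := by
  simp [gR, Finsupp.single_apply]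

theorem PR_basis (i : Fin 4) : PR b (b i) = b (swapPairs i) := by
  fin_cases i <;> simp [PR, swapPairs]

theorem repr_PR (x : L) (k : Fin 4) : b.repr (PR b x) k = b.repr x (swapPairs k) := by
  have hcoord : (b.coord k).comp (PR b) = b.coord (swapPairs k) :=
    b.ext fun i => by
      fin_cases i <;> fin_cases k <;> simp [PR_basis, swapPairs]
  exact LinearMap.congr_fun hcoord x

end Basis

theorem FR_basis_right {L : Type*} [LieRing L] [LieAlgebra ℝ L] (b : Module.Basis (Fin 4) ℝ L)
    (x y : L) (k : Fin 4) :
    FR b x y (b k) = 2⁻¹ * (b.repr ⁅x, PR b y⁆ k - b.repr ⁅x, y⁆ (swapPairs k)) := by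
  simp [FR, nablaP, gR_basis_right, repr_PR]

/-- Components (3.9) of the tensor F in the Riemannian family. -/
theorem F_components_riemannian
    (L : Type*) [LieRing L] [LieAlgebra ℝ L] (b : Module.Basis (Fin 4) ℝ L)
    (l1 l2 l3 l4 : ℝ)
    (h12 : ⁅b 0, b 1⁆ = l1 • b 2 + l2 • b 3)
    (h13 : ⁅b 0, b 2⁆ = -(l1 • b 1) + l4 • b 3)
    (h14 : ⁅b 0, b 3⁆ = -(l2 • b 1) - l4 • b 2)
    (h23 : ⁅b 1, b 2⁆ = l1 • b 0 + l3 • b 3)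
    (h24 : ⁅b 1, b 3⁆ = l2 • b 0 - l3 • b 2)
    (h34 : ⁅b 2, b 3⁆ = l4 • b 0 + l3 • b 1)
    : FR b (b 1) (b 0) (b 0) = l1 ∧ FR b (b 1) (b 2) (b 2) = -l1 ∧
      2 * FR b (b 0) (b 2) (b 3) = l1 ∧ 2 * FR b (b 2) (b 1) (b 2) = l1 ∧
      2 * FR b (b 0) (b 0) (b 1) = -l1 ∧ 2 * FR b (b 2) (b 0) (b 3) = -l1 ∧
      FR b (b 0) (b 3) (b 3) = l2 ∧ FR b (b 0) (b 1) (b 1) = -l2 ∧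
      2 * FR b (b 1) (b 0) (b 1) = l2 ∧ 2 * FR b (b 3) (b 1) (b 2) = l2 ∧
      2 * FR b (b 1) (b 2) (b 3) = -l2 ∧ 2 * FR b (b 3) (b 0) (b 3) = -l2 ∧
      FR b (b 2) (b 1) (b 1) = l3 ∧ FR b (b 2) (b 3) (b 3) = -l3 ∧
      2 * FR b (b 1) (b 0) (b 3) = l3 ∧ 2 * FR b (b 3) (b 2) (b 3) = l3 ∧
      2 * FR b (b 1) (b 1) (b 2) = -l3 ∧ 2 * FR b (b 3) (b 0) (b 1) = -l3 ∧
      FR b (b 3) (b 2) (b 2) = l4 ∧ FR b (b 3) (b 0) (b 0) = -l4 ∧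
      2 * FR b (b 0) (b 3) (b 0) = l4 ∧ 2 * FR b (b 2) (b 1) (b 0) = l4 ∧
      2 * FR b (b 0) (b 2) (b 1) = -l4 ∧ 2 * FR b (b 2) (b 2) (b 3) = -l4 := by
  have h21 : ⁅b 1, b 0⁆ = -(l1 • b 2 + l2 • b 3) := by rw [← lie_skew, h12]
  have h31 : ⁅b 2, b 0⁆ = -(-(l1 • b 1) + l4 • b 3) := by rw [← lie_skew, h13]
  have h41 : ⁅b 3, b 0⁆ = -(-(l2 • b 1) - l4 • b 2) := by rw [← lie_skew, h14]
  have h32 : ⁅b 2, b 1⁆ = -(l1 • b 0 + l3 • b 3) := by rw [← lie_skew, h23]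
  have h42 : ⁅b 3, b 1⁆ = -(l2 • b 0 - l3 • b 2) := by rw [← lie_skew, h24]
  have h43 : ⁅b 3, b 2⁆ = -(l4 • b 0 + l3 • b 1) := by rw [← lie_skew, h34]
  refine ⟨?_, ?_, ?_, ?_, ?_, ?_, ?_, ?_, ?_, ?_, ?_, ?_, ?_, ?_, ?_, ?_, ?_, ?_, ?_, ?_, ?_, ?_, ?_, ?_⟩ <;>
  · simp [FR_basis_right, PR_basis, swapPairs, h12, h13, h14, h23, h24, h34,
      h21, h31, h41, h32, h42, h43, Module.Basis.repr_self] <;>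
    ring
end
end

section
/- In the Riemannian Lie algebra family, the scalar curvature is τ = (3/2)(λ₁² + λ₂² + λ₃² + λ₄²). -/
noncomputable section

/-! Since `R(Xᵢ,y,y,Xᵢ) = ¼|[Xᵢ,y]|²`, the scalar curvature is `¼ Σᵢⱼ |[Xᵢ,Xⱼ]|² = ½ Σ_{i<j} |[Xᵢ,Xⱼ]|²`.
Each of the six brackets has two orthogonal components, so its squared norm is `λₐ² + λ_c²`, and every
`λₐ` occurs in exactly three of them. -/

section OrthonormalBasis

variable {L : Type*}

section Metric

variable [AddCommGroup L] [Module ℝ L] (b : Module.Basis (Fin 4) ℝ L)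

theorem gR_zero_left (y : L) : gR b 0 y = 0 := by
  simp [gR]

theorem gR_neg_left (x y : L) : gR b (-x) y = -gR b x y := by
  simp [gR, Finset.sum_neg_distrib]

theorem gR_neg_right (x y : L) : gR b x (-y) = -gR b x y := by
  simp [gR, Finset.sum_neg_distrib]

theorem gR_smul_add_smul_self {k m : Fin 4} (hkm : k ≠ m) (s t : ℝ) :
    gR b (s • b k + t • b m) (s • b k + t • b m) = s ^ 2 + t ^ 2 := by
  simp [gR, Finsupp.single_apply, add_mul, mul_add, Finset.sum_add_distrib, hkm, hkm.symm, sq]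

end Metric

section Curvature

variable [LieRing L] [LieAlgebra ℝ L] (b : Module.Basis (Fin 4) ℝ L)

theorem ricR_self (y : L) : ricR b y y = 4⁻¹ * ∑ i, gR b ⁅b i, y⁆ ⁅b i, y⁆ := by
  simp only [ricR, RT, ← lie_skew y, gR_neg_right, Finset.mul_sum]
  ring_nf

theorem tauR_eq_sum_lie_sq :
    tauR b = 4⁻¹ * ∑ i, ∑ j, gR b ⁅b i, b j⁆ ⁅b i, b j⁆ := by
  simp only [tauR, ricR_self, Finset.mul_sum]
  rw [Finset.sum_comm]

theorem tauR_eq_half_sum_pairs :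
    tauR b = 2⁻¹ * (gR b ⁅b 0, b 1⁆ ⁅b 0, b 1⁆ + gR b ⁅b 0, b 2⁆ ⁅b 0, b 2⁆ +
      gR b ⁅b 0, b 3⁆ ⁅b 0, b 3⁆ + gR b ⁅b 1, b 2⁆ ⁅b 1, b 2⁆ +
      gR b ⁅b 1, b 3⁆ ⁅b 1, b 3⁆ + gR b ⁅b 2, b 3⁆ ⁅b 2, b 3⁆) := by
  rw [tauR_eq_sum_lie_sq]
  simp only [Fin.sum_univ_four, lie_self, ← lie_skew (b 0), ← lie_skew (b 1) (b 2),
    ← lie_skew (b 1) (b 3), ← lie_skew (b 2) (b 3), gR_neg_left, gR_neg_right, neg_neg,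
    gR_zero_left]
  ring

end Curvature

end OrthonormalBasis

/-- The scalar curvature is τ = (3/2)(λ₁²+λ₂²+λ₃²+λ₄²). -/
theorem scalar_curvature_riemannian
    (L : Type*) [LieRing L] [LieAlgebra ℝ L] (b : Module.Basis (Fin 4) ℝ L)
    (l1 l2 l3 l4 : ℝ)
    (h12 : ⁅b 0, b 1⁆ = l1 • b 2 + l2 • b 3)
    (h13 : ⁅b 0, b 2⁆ = -(l1 • b 1) + l4 • b 3)
    (h14 : ⁅b 0, b 3⁆ = -(l2 • b 1) - l4 • b 2)
    (h23 : ⁅b 1, b 2⁆ = l1 • b 0 + l3 • b 3)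
    (h24 : ⁅b 1, b 3⁆ = l2 • b 0 - l3 • b 2)
    (h34 : ⁅b 2, b 3⁆ = l4 • b 0 + l3 • b 1)
    : tauR b = (3 / 2) * (l1 ^ 2 + l2 ^ 2 + l3 ^ 2 + l4 ^ 2) := by
  rw [tauR_eq_half_sum_pairs, h12, h13, h14, h23, h24, h34]
  simp only [sub_eq_add_neg, ← neg_smul]
  simp (disch := decide) only [gR_smul_add_smul_self]
  ring
end
end
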